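/- For every p ≥ 1 and every α ∈ Z₂^p, the subspaces of the conjugate pair associated to the binary-partitioning string α are abelian: for the ℂ-subspaces W_α := span{S^ζ_α : ζ·α = 0 in ZMod 2} and Ŵ_α := span{S^ζ_α : ζ·α = 1 in ZMod 2} of 2^p × 2^p complex matrices, any two elements X, Y ∈ W_α satisfy X*Y = Y*X, and any two elements X, Y ∈ Ŵ_α satisfy X*Y = Y*X. -/
import Mathlib


open Matrix

/-- `Z₂^p`, the binary strings of length `p`. -/
abbrev Z2 (p : ℕ) : Type := Fin p → ZMod 2

/-- Inner product of two binary strings, valued in `ZMod 2`. -/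
def dotp {p : ℕ} (ζ γ : Z2 p) : ZMod 2 := ∑ i, ζ i * γ i

/-- `(-1)^x` for `x : ZMod 2`, as a complex number. -/
noncomputable def sgn (x : ZMod 2) : ℂ := if x = 0 then 1 else -1

/-- The spinor `S^ζ_α`: the `2^p × 2^p` complex matrix with `(γ, β)` entry
`(-1)^{ζ·γ}` if `γ = β + α` and `0` otherwise. -/
noncomputable def Spinor {p : ℕ} (ζ α : Z2 p) : Matrix (Z2 p) (Z2 p) ℂ :=
  Matrix.of fun γ β => if γ = β + α then sgn (dotp ζ γ) else 0

/-- `W_α`: the span of the spinors `S^ζ_α` with `ζ·α = 0`. -/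
noncomputable def Wsp {p : ℕ} (α : Z2 p) : Submodule ℂ (Matrix (Z2 p) (Z2 p) ℂ) :=
  Submodule.span ℂ {M | ∃ ζ, dotp ζ α = 0 ∧ M = Spinor ζ α}

/-- `Ŵ_α`: the span of the spinors `S^ζ_α` with `ζ·α = 1`. -/
noncomputable def WspHat {p : ℕ} (α : Z2 p) : Submodule ℂ (Matrix (Z2 p) (Z2 p) ℂ) :=
  Submodule.span ℂ {M | ∃ ζ, dotp ζ α = 1 ∧ M = Spinor ζ α}

lemma sgn_add (x y : ZMod 2) : sgn (x + y) = sgn x * sgn y := by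
  have h : ∀ z : ZMod 2, z = 0 ∨ z = 1 := by decide
  rcases h x with hx | hx <;> rcases h y with hy | hy <;>
    subst hx <;> subst hy <;> simp [sgn, show (1:ZMod 2) + 1 = 0 from by decide]

lemma dotp_add_right {p : ℕ} (ζ γ α : Z2 p) :
    dotp ζ (γ + α) = dotp ζ γ + dotp ζ α := by
  simp [dotp, mul_add, Finset.sum_add_distrib]

lemma spinor_mul {p : ℕ} (ζ η α : Z2 p) :
    Spinor ζ α * Spinor η α =
      Matrix.of fun γ β =>
        if γ = β then sgn (dotp ζ γ) * sgn (dotp η γ) * sgn (dotp η α) else 0 := by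
  ext γ β
  simp only [Matrix.mul_apply, Spinor, Matrix.of_apply, ite_mul, zero_mul, mul_ite, mul_zero]
  rw [Finset.sum_eq_single (β + α)]
  · have h2 : β + α + α = β := by
      funext i
      have h : ∀ z : ZMod 2, z + z = 0 := by decide
      show β i + α i + α i = β i
      rw [add_assoc, h, add_zero]
    rw [if_pos rfl, h2]
    by_cases h : γ = β
    · subst h
      simp [dotp_add_right, sgn_add]
      ring
    · simp [h]
  · intro b _ hb
    have : ¬ b = β + α := hb
    simp [this]
  · intro h; exact absurd (Finset.mem_univ _) h

lemma spinor_comm {p : ℕ} (ζ η α : Z2 p) (h : dotp ζ α = dotp η α) :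
    Spinor ζ α * Spinor η α = Spinor η α * Spinor ζ α := by
  rw [spinor_mul, spinor_mul, h]
  ext γ β
  simp only [Matrix.of_apply]
  split <;> ring

lemma span_comm {R M : Type*} [CommSemiring R] [NonUnitalNonAssocSemiring M]
    [Module R M] [SMulCommClass R M M] [IsScalarTower R M M]
    (s : Set M) (h : ∀ x ∈ s, ∀ y ∈ s, x * y = y * x) :
    ∀ X ∈ Submodule.span R s, ∀ Y ∈ Submodule.span R s, X * Y = Y * X := by
  intro X hX
  refine Submodule.span_induction (p := fun X _ => ∀ Y ∈ Submodule.span R s, X * Y = Y * X)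
    ?_ ?_ ?_ ?_ hX
  · intro x hx Y hY
    refine Submodule.span_induction (p := fun Y _ => x * Y = Y * x) ?_ ?_ ?_ ?_ hY
    · intro y hy; exact h x hx y hy
    · simp
    · intro a b _ _ ha hb; rw [mul_add, add_mul, ha, hb]
    · intro r a _ ha; rw [mul_smul_comm, smul_mul_assoc, ha]
  · intro Y _; simp
  · intro a b _ _ ha hb Y hY; rw [add_mul, mul_add, ha Y hY, hb Y hY]
  · intro r a _ ha Y hY; rw [smul_mul_assoc, mul_smul_comm, ha Y hY]

/-- The two subspaces of the conjugate pair `{W_α, Ŵ_α}` are abelian. -/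
theorem conjugate_pair_abelian {p : ℕ} (hp : 1 ≤ p) (α : Z2 p) :
    (∀ X ∈ Wsp α, ∀ Y ∈ Wsp α, X * Y = Y * X) ∧
    (∀ X ∈ WspHat α, ∀ Y ∈ WspHat α, X * Y = Y * X) := by
  constructor
  · exact span_comm _ (by
      rintro x ⟨ζ, hζ, rfl⟩ y ⟨η, hη, rfl⟩
      exact spinor_comm ζ η α (hζ.trans hη.symm))
  · exact span_comm _ (by
      rintro x ⟨ζ, hζ, rfl⟩ y ⟨η, hη, rfl⟩
      exact spinor_comm ζ η α (hζ.trans hη.symm))
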